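/- arXiv:2506.14242 — 2 statements merged into one kernel-verified Lean document; each statement's English description precedes it below -/
import Mathlib

section
/- Let f : ℝ^m → [0,∞) be a probability density such that ∫ f(x)^q dx < ∞ for all q in some neighborhood of 1 and the Shannon differential entropy H(f) = −∫ f(x) log f(x) dx is finite. Then the Rényi entropy converges to the Shannon entropy as q → 1: lim_{q→1} H*_q(f) = H(f). -/
open MeasureTheory Filter Topology

/-!
Write `Z(q) = ∫ f ^ q`, so that `Z 1 = 1` and the Rényi entropy is
`(log Z q - log Z 1) / (1 - q)`, the negative of a difference quotient of `log ∘ Z` at `1`.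
Its limit is therefore `-(log ∘ Z)'(1) = -Z'(1) = -∫ f log f`. The derivative may be taken under
the integral sign: for `|q - q₀| < δ`, `f ^ q |log f|` is dominated by a multiple of
`f ^ (q₀ - 2δ) + f ^ (q₀ + 2δ)`, which is integrable once `2δ` is inside the neighbourhood of
integrability.
-/

namespace Real

lemma rpow_le_rpow_add_rpow {t a b p : ℝ} (ht : 0 < t) (hap : a ≤ p) (hpb : p ≤ b) :
    t ^ p ≤ t ^ a + t ^ b := by
  rcases le_total t 1 with h | h
  · linarith [rpow_le_rpow_of_exponent_ge ht h hap, rpow_nonneg ht.le b]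
  · linarith [rpow_le_rpow_of_exponent_le h hpb, rpow_nonneg ht.le a]

lemma abs_log_le_rpow_add_rpow_neg_div {t δ : ℝ} (ht : 0 < t) (hδ : 0 < δ) :
    |log t| ≤ (t ^ δ + t ^ (-δ)) / δ := by
  have hlog : log t ≤ t ^ δ / δ := log_le_rpow_div ht.le hδ
  have hlog_inv : log t⁻¹ ≤ t⁻¹ ^ δ / δ := log_le_rpow_div (inv_nonneg.2 ht.le) hδ
  rw [log_inv, inv_rpow ht.le, ← rpow_neg ht.le] at hlog_inv
  rw [abs_le, add_div]
  constructor <;> linarith [div_nonneg (rpow_nonneg ht.le δ) hδ.le,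
    div_nonneg (rpow_nonneg ht.le (-δ)) hδ.le]

lemma rpow_mul_abs_log_le {t δ q q₀ : ℝ} (ht : 0 ≤ t) (hδ : 0 < δ) (hq : |q - q₀| < δ) :
    t ^ q * |log t| ≤ 2 * (t ^ (q₀ - 2 * δ) + t ^ (q₀ + 2 * δ)) / δ := by
  rcases ht.eq_or_lt with rfl | ht
  · simp only [log_zero, abs_zero, mul_zero]
    positivity
  rw [abs_lt] at hq
  have hq_add : t ^ (q + δ) ≤ t ^ (q₀ - 2 * δ) + t ^ (q₀ + 2 * δ) :=
    rpow_le_rpow_add_rpow ht (by linarith) (by linarith)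
  have hq_sub : t ^ (q - δ) ≤ t ^ (q₀ - 2 * δ) + t ^ (q₀ + 2 * δ) :=
    rpow_le_rpow_add_rpow ht (by linarith) (by linarith)
  calc t ^ q * |log t| ≤ t ^ q * ((t ^ δ + t ^ (-δ)) / δ) :=
        mul_le_mul_of_nonneg_left (abs_log_le_rpow_add_rpow_neg_div ht hδ) (rpow_nonneg ht.le q)
    _ = (t ^ (q + δ) + t ^ (q - δ)) / δ := by
        rw [rpow_add ht, sub_eq_add_neg, rpow_add ht]
        ring
    _ ≤ 2 * (t ^ (q₀ - 2 * δ) + t ^ (q₀ + 2 * δ)) / δ :=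
        div_le_div_of_nonneg_right (by linarith) hδ.le

-- At `t = 0` the function `p ↦ 0 ^ p` vanishes near `q > 0`, matching the junk value `log 0 = 0`.
lemma hasDerivAt_const_rpow_of_nonneg {t q : ℝ} (ht : 0 ≤ t) (hq : 0 < q) :
    HasDerivAt (fun p => t ^ p) (t ^ q * log t) q := by
  rcases ht.eq_or_lt with rfl | ht
  · have hzero : (fun p : ℝ => (0 : ℝ) ^ p) =ᶠ[𝓝 q] fun _ => 0 := by
      filter_upwards [eventually_gt_nhds hq] with p hp
      exact zero_rpow hp.ne'
    simpa only [log_zero, mul_zero] using (hasDerivAt_const q (0 : ℝ)).congr_of_eventuallyEq hzero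
  · exact (hasStrictDerivAt_const_rpow ht q).hasDerivAt

end Real

open Real

theorem hasDerivAt_integral_rpow {α : Type*} [MeasurableSpace α] {μ : Measure α} {f : α → ℝ}
    (hf0 : ∀ x, 0 ≤ f x) (hf : Measurable f) {q₀ : ℝ} (hq₀ : 0 < q₀)
    (hint : ∀ᶠ q in 𝓝 q₀, Integrable (fun x => f x ^ q) μ) :
    HasDerivAt (fun q => ∫ x, f x ^ q ∂μ) (∫ x, f x ^ q₀ * log (f x) ∂μ) q₀ := by
  obtain ⟨ε, hε, hint⟩ := Metric.eventually_nhds_iff.1 hint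
  set δ := min (ε / 3) (q₀ / 3)
  have hδ : 0 < δ := lt_min (by linarith) (by linarith)
  have hδε : 2 * δ < ε := by linarith [min_le_left (ε / 3) (q₀ / 3)]
  have hδq₀ : δ < q₀ := by linarith [min_le_right (ε / 3) (q₀ / 3)]
  have hint_of_abs_le {q : ℝ} (hq : |q - q₀| ≤ 2 * δ) : Integrable (fun x => f x ^ q) μ :=
    hint (by rw [dist_eq]; linarith)
  have hbound_int : Integrable (fun x => 2 * (f x ^ (q₀ - 2 * δ) + f x ^ (q₀ + 2 * δ)) / δ) μ :=
    (((hint_of_abs_le (by simp [abs_of_pos hδ])).add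
      (hint_of_abs_le (by simp [abs_of_pos hδ]))).const_mul 2).div_const δ
  refine (hasDerivAt_integral_of_dominated_loc_of_deriv_le (F := fun q x => f x ^ q)
    (F' := fun q x => f x ^ q * log (f x)) (Metric.ball_mem_nhds q₀ hδ)
    (Eventually.of_forall fun q => (hf.pow_const q).aestronglyMeasurable)
    (hint_of_abs_le (by simp [hδ.le])) ((hf.pow_const q₀).mul hf.log).aestronglyMeasurable
    (Eventually.of_forall fun x q hq => ?_) hbound_int
    (Eventually.of_forall fun x q hq => ?_)).2
  all_goals rw [Metric.mem_ball, dist_eq] at hq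
  · rw [norm_mul, norm_of_nonneg (rpow_nonneg (hf0 x) q), norm_eq_abs]
    exact rpow_mul_abs_log_le (hf0 x) hδ hq
  · exact hasDerivAt_const_rpow_of_nonneg (hf0 x) (by linarith [(abs_lt.1 hq).1])

theorem HasDerivAt.tendsto_one_div_one_sub_mul_log {g : ℝ → ℝ} {L : ℝ} (hg : HasDerivAt g L 1)
    (hg1 : g 1 = 1) :
    Tendsto (fun q => 1 / (1 - q) * Real.log (g q)) (𝓝[≠] 1) (𝓝 (-L)) := by
  have hlog : HasDerivAt (fun q => Real.log (g q)) L 1 := by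
    simpa [hg1] using hg.log (by simp [hg1])
  refine ((hasDerivAt_iff_tendsto_slope.1 hlog).neg).congr fun q => ?_
  rw [slope_def_field, hg1, log_one, sub_zero, ← neg_sub, div_neg, neg_neg, one_div_mul_eq_div]

theorem renyi_tendsto_shannon_general (m : ℕ)
    (f : (Fin m → ℝ) → ℝ)
    (hf0 : ∀ x, 0 ≤ f x) (hfmeas : Measurable f) (hf1 : ∫ x, f x = 1)
    (hnbhd : ∃ ε > (0 : ℝ), ∀ q : ℝ, |q - 1| < ε → Integrable (fun x => f x ^ q)) :
    Tendsto (fun q : ℝ => (1 / (1 - q)) * Real.log (∫ x, f x ^ q))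
      (𝓝[≠] (1 : ℝ)) (𝓝 (-∫ x, f x * Real.log (f x))) := by
  have hint : ∀ᶠ q : ℝ in 𝓝 1, Integrable (fun x => f x ^ q) := by
    obtain ⟨ε, hε, hε_int⟩ := hnbhd
    exact Metric.eventually_nhds_iff.2 ⟨ε, hε, fun q hq => hε_int q (by rwa [← dist_eq])⟩
  have hZ := hasDerivAt_integral_rpow hf0 hfmeas one_pos hint
  simp only [rpow_one] at hZ
  exact hZ.tendsto_one_div_one_sub_mul_log (by simpa only [rpow_one] using hf1)

/-- **Rényi entropy converges to Shannon entropy as `q → 1`.**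
If `f` is a probability density on `ℝ^m` with `∫ f^q < ∞` for all `q` in a neighborhood
of `1` and finite Shannon differential entropy `H(f) = -∫ f log f`, then
`H*_q(f) = (1/(1-q)) log ∫ f^q → H(f)` as `q → 1`. -/
theorem renyi_tendsto_shannon (m : ℕ)
    (f : (Fin m → ℝ) → ℝ)
    (hf0 : ∀ x, 0 ≤ f x) (hfmeas : Measurable f) (hf1 : ∫ x, f x = 1)
    (hnbhd : ∃ ε > (0 : ℝ), ∀ q : ℝ, |q - 1| < ε → Integrable (fun x => f x ^ q))
    (hent : Integrable (fun x => f x * Real.log (f x))) :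
    Tendsto (fun q : ℝ => (1 / (1 - q)) * Real.log (∫ x, f x ^ q))
      (𝓝[≠] (1 : ℝ)) (𝓝 (-∫ x, f x * Real.log (f x))) :=
  renyi_tendsto_shannon_general m f hf0 hfmeas hf1 hnbhd
end

section
/- Let f(x; m, s) = [Γ(m/2+1) / (Γ(m/s+1) π^{m/2} 2^{m/s})] exp(−(1/2)‖x‖^s) be the isotropic exponential power density IEP_m(s) on ℝ^m, with s > 0, and write A(m,s) = π^{m/2} 2^{m/s} Γ(m/s+1)/Γ(m/2+1) for its normalization constant. Then for every q > 0, q ≠ 1, the Tsallis entropy is H_q(f(·; m, s)) = (1/(1−q)) ( q^{−m/s} A(m,s)^{1−q} − 1 ). -/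
/-!
Raising the density to the power `q` gives `A^{-q} exp(-(q/2)‖x‖^s)`. The substitution
`x ↦ b^{1/s} x` shows that `∫ exp(-b‖x‖^s)` is `b^{-m/s}` times its value at `b = 1`, and
the latter is `Γ(m/s+1)` times the volume `π^{m/2}/Γ(m/2+1)` of the unit ball. For `b = q/2`
the factor `2^{m/s}` completes `A`, so the integral is `q^{-m/s} A^{1-q}`.
-/

open MeasureTheory Module Real

section

variable {E : Type*} [NormedAddCommGroup E]

theorem integral_exp_neg_mul_norm_rpow_eq_rpow_mul [NormedSpace ℝ E] [FiniteDimensional ℝ E]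
    [MeasurableSpace E] [BorelSpace E] (μ : Measure E) [μ.IsAddHaarMeasure] {s b : ℝ}
    (hs : 0 < s) (hb : 0 < b) :
    ∫ x, exp (-b * ‖x‖ ^ s) ∂μ =
      b ^ (-(finrank ℝ E : ℝ) / s) * ∫ x, exp (-‖x‖ ^ s) ∂μ := by
  have hr : 0 < b ^ s⁻¹ := rpow_pos_of_pos hb _
  have hscale (x : E) : b * ‖x‖ ^ s = ‖b ^ s⁻¹ • x‖ ^ s := by
    rw [norm_smul, norm_of_nonneg hr.le, mul_rpow hr.le (norm_nonneg x),
      ← rpow_mul hb.le, inv_mul_cancel₀ hs.ne', rpow_one]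
  simp_rw [neg_mul, hscale]
  rw [Measure.integral_comp_smul_of_nonneg μ (fun y => exp (-‖y‖ ^ s)) _ (hR := hr.le),
    smul_eq_mul, ← rpow_natCast, ← rpow_mul hb.le, ← rpow_neg hb.le, neg_div, div_eq_inv_mul]

section InnerProductSpace

variable [InnerProductSpace ℝ E] [FiniteDimensional ℝ E] [MeasurableSpace E] [BorelSpace E]

theorem InnerProductSpace.volume_unitBall :
    volume (Metric.ball (0 : E) 1) =
      .ofReal (π ^ ((finrank ℝ E : ℝ) / 2) / Gamma (finrank ℝ E / 2 + 1)) := by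
  obtain hE | hE := subsingleton_or_nontrivial E
  · have hP : (parallelepiped (stdOrthonormalBasis ℝ E)).Nonempty :=
      (Set.nonempty_Icc.2 zero_le_one).image _
    have h := (stdOrthonormalBasis ℝ E).volume_parallelepiped
    rw [Subsingleton.eq_univ_of_nonempty hP] at h
    rw [Subsingleton.eq_univ_of_nonempty (Metric.nonempty_ball.2 zero_lt_one), h,
      finrank_zero_of_subsingleton]
    simp
  · rw [InnerProductSpace.volume_ball, ENNReal.ofReal_one, one_pow, one_mul, sqrt_eq_rpow,
      ← rpow_natCast, ← rpow_mul pi_pos.le, one_div_mul_eq_div]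

theorem InnerProductSpace.integral_exp_neg_norm_rpow {s : ℝ} (hs : 0 < s) :
    ∫ x : E, exp (-‖x‖ ^ s) =
      Gamma (finrank ℝ E / s + 1) * π ^ ((finrank ℝ E : ℝ) / 2) /
        Gamma (finrank ℝ E / 2 + 1) := by
  have h := (measure_unitBall_eq_integral_div_gamma (volume : Measure E) hs).symm.trans
    InnerProductSpace.volume_unitBall
  rw [ENNReal.ofReal_eq_ofReal_iff (div_nonneg (integral_nonneg fun _ => (exp_pos _).le)
      (Gamma_nonneg_of_nonneg (by positivity))) (by positivity),
    div_eq_iff (Gamma_pos_of_pos (by positivity)).ne'] at h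
  rw [h]
  ring

theorem InnerProductSpace.integral_exp_neg_mul_norm_rpow {s b : ℝ} (hs : 0 < s) (hb : 0 < b) :
    ∫ x : E, exp (-b * ‖x‖ ^ s) = b ^ (-(finrank ℝ E : ℝ) / s) *
      (Gamma (finrank ℝ E / s + 1) * π ^ ((finrank ℝ E : ℝ) / 2) /
        Gamma (finrank ℝ E / 2 + 1)) := by
  rw [integral_exp_neg_mul_norm_rpow_eq_rpow_mul volume hs hb, integral_exp_neg_norm_rpow hs]

end InnerProductSpace

end

theorem tsallis_isotropicExponentialPower_general (m : ℕ) (s : ℝ) (hs : 0 < s)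
    (q : ℝ) (hq0 : 0 < q)
    (A : ℝ)
    (hA : A = Real.pi ^ ((m : ℝ) / 2) * 2 ^ ((m : ℝ) / s) * Real.Gamma ((m : ℝ) / s + 1) /
      Real.Gamma ((m : ℝ) / 2 + 1)) :
    (1 / (1 - q)) *
        ((∫ x : EuclideanSpace ℝ (Fin m),
          ((Real.Gamma ((m : ℝ) / 2 + 1) /
              (Real.Gamma ((m : ℝ) / s + 1) * Real.pi ^ ((m : ℝ) / 2) * 2 ^ ((m : ℝ) / s))) *
            Real.exp (-(1 / 2) * ‖x‖ ^ s)) ^ q) - 1) =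
      (1 / (1 - q)) * (q ^ (-(m : ℝ) / s) * A ^ (1 - q) - 1) := by
  have hApos : 0 < A := by rw [hA]; positivity
  have hnorm : Gamma (m / 2 + 1) / (Gamma (m / s + 1) * π ^ ((m : ℝ) / 2) * 2 ^ ((m : ℝ) / s))
      = A⁻¹ := by
    rw [hA, inv_div]; ring
  have hpow (x : EuclideanSpace ℝ (Fin m)) :
      (A⁻¹ * exp (-(1 / 2) * ‖x‖ ^ s)) ^ q = A⁻¹ ^ q * exp (-(q / 2) * ‖x‖ ^ s) := by
    rw [mul_rpow (inv_nonneg.2 hApos.le) (exp_pos _).le, ← exp_mul]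
    ring_nf
  simp_rw [hnorm, hpow]
  rw [integral_const_mul, InnerProductSpace.integral_exp_neg_mul_norm_rpow hs (by positivity),
    finrank_euclideanSpace_fin, div_rpow hq0.le zero_le_two, neg_div, rpow_neg zero_le_two,
    inv_rpow hApos.le, rpow_sub hApos, rpow_one]
  congr 2
  rw [hA]
  field_simp

/-- **Tsallis entropy of the isotropic exponential power distribution `IEP_m(s)`.**
With density `f(x; m, s) = [Γ(m/2+1) / (Γ(m/s+1) π^{m/2} 2^{m/s})] exp(-(1/2)‖x‖^s)`
and normalization constant `A(m,s) = π^{m/2} 2^{m/s} Γ(m/s+1)/Γ(m/2+1)`, the Tsallis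
entropy of order `q > 0`, `q ≠ 1`, is
`H_q(f) = (1/(1-q)) (q^{-m/s} A(m,s)^{1-q} - 1)`. -/
theorem tsallis_isotropicExponentialPower (m : ℕ) (hm : 1 ≤ m) (s : ℝ) (hs : 0 < s)
    (q : ℝ) (hq0 : 0 < q) (hq1 : q ≠ 1)
    (A : ℝ)
    (hA : A = Real.pi ^ ((m : ℝ) / 2) * 2 ^ ((m : ℝ) / s) * Real.Gamma ((m : ℝ) / s + 1) /
      Real.Gamma ((m : ℝ) / 2 + 1)) :
    (1 / (1 - q)) *
        ((∫ x : EuclideanSpace ℝ (Fin m),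
          ((Real.Gamma ((m : ℝ) / 2 + 1) /
              (Real.Gamma ((m : ℝ) / s + 1) * Real.pi ^ ((m : ℝ) / 2) * 2 ^ ((m : ℝ) / s))) *
            Real.exp (-(1 / 2) * ‖x‖ ^ s)) ^ q) - 1) =
      (1 / (1 - q)) * (q ^ (-(m : ℝ) / s) * A ^ (1 - q) - 1) :=
  tsallis_isotropicExponentialPower_general m s hs q hq0 A hA
end
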